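/- Let r be an odd prime with r ≠ 5 and let V be the deleted permutation module over ZMod r. Define the ZMod r-bilinear map γ : V × V → V by γ(f, g)(m) = 5 * f m * g m − ∑ j, f j * g j. Then: (1) γ takes values in V and is Equiv.Perm (Fin 5)-equivariant, i.e. γ(σ • f, σ • g) = σ • γ(f, g) for all σ ∈ Equiv.Perm (Fin 5); and (2) every alternatingGroup (Fin 5)-equivariant ZMod r-bilinear map μ : V × V → V is a ZMod r-scalar multiple of γ. In particular, the space of alternatingGroup (Fin 5)-equivariant bilinear maps V × V → V is one-dimensional over ZMod r. -/

import Mathlib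

/-- The deleted permutation module: functions `Fin 5 → ZMod r` summing to zero. -/
def V (r : ℕ) : Submodule (ZMod r) (Fin 5 → ZMod r) where
  carrier := {f | ∑ i, f i = 0}
  add_mem' := by
    intro a b ha hb
    simp only [Set.mem_setOf_eq, Pi.add_apply, Finset.sum_add_distrib] at *
    rw [ha, hb, add_zero]
  zero_mem' := by simp
  smul_mem' := by
    intro c f hf
    simp only [Set.mem_setOf_eq, Pi.smul_apply, smul_eq_mul, ← Finset.mul_sum] at *
    rw [hf, mul_zero]

/-- The permutation action of `Equiv.Perm (Fin 5)` on `V r`, given by `σ • f = f ∘ σ⁻¹`. -/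
def rho (r : ℕ) : Representation (ZMod r) (Equiv.Perm (Fin 5)) (V r) where
  toFun σ :=
    { toFun := fun f => ⟨fun i => (f : Fin 5 → ZMod r) (σ⁻¹ i),
        (Equiv.sum_comp σ⁻¹ (f : Fin 5 → ZMod r)).trans f.2⟩
      map_add' := fun _ _ => rfl
      map_smul' := fun _ _ => rfl }
  map_one' := rfl
  map_mul' := fun _ _ => rfl

/-- The bilinear map `γ` of Table 1: `γ(f, g)(m) = 5 * f m * g m - ∑ j, f j * g j`. -/
def gammaFun (r : ℕ) (f g : Fin 5 → ZMod r) : Fin 5 → ZMod r :=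
  fun m => 5 * f m * g m - ∑ j, f j * g j

/-!
The vectors `spike i = 5 • Pi.single i 1 - 1` lie in `V`, are permuted by `Sym(5)`, and span `V`
once `5` is invertible, so a bilinear map `μ` on `V` is determined by the tensor
`T i j m = μ (spike i) (spike j) m`. If `μ` is `Alt(5)`-equivariant, 3-transitivity of `Alt(5)`
makes `T i j m` depend only on which of `i, j, m` coincide, leaving five unknowns; since `μ` takes
values in `V` and `∑ i, spike i = 0`, `T` sums to zero along each index. When `2` is invertible
these relations force `T = 0` as soon as `T 0 1 2 = 0`, so `μ - c • γ` vanishes for the `c`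
with `μ` and `c • γ` agreeing at `(0, 1, 2)`, where `γ` takes the unit value `10`.
-/

open Equiv Finset

section spike

variable {R : Type*} [CommRing R]

def spike (i : Fin 5) : Fin 5 → R := fun m => if i = m then 4 else -1

theorem sum_spike (i : Fin 5) : ∑ m, (spike i m : R) = 0 := by
  fin_cases i <;> simp [spike, Fin.sum_univ_five] <;> ring

theorem sum_spike_apply (m : Fin 5) : ∑ i, (spike i m : R) = 0 := by
  fin_cases m <;> simp [spike, Fin.sum_univ_five] <;> ring

theorem sum_smul_spike {h : Fin 5 → R} (hh : ∑ i, h i = 0) :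
    ∑ i, h i • spike i = (5 : R) • h := by
  funext m
  have hterm : ∀ i, h i * spike i m = (if i = m then 5 * h i else 0) - h i := by
    intro i
    simp only [spike]
    split <;> ring
  simp only [Finset.sum_apply, Pi.smul_apply, smul_eq_mul, hterm, sum_sub_distrib, sum_ite_eq',
    mem_univ, if_true, hh, sub_zero]

theorem spike_comp_perm (σ : Perm (Fin 5)) (i : Fin 5) :
    (spike i : Fin 5 → R) ∘ ⇑σ⁻¹ = spike (σ i) := by
  funext m
  simp [spike, Perm.inv_def, Equiv.eq_symm_apply]

end spike

section invariantTensor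

theorem exists_mem_alternatingGroup_canonical : ∀ i j m : Fin 5, ∃ σ : Perm (Fin 5),
    σ ∈ alternatingGroup (Fin 5) ∧ σ 0 = i ∧ σ (if i = j then 0 else 1) = j ∧
      σ (if i = m then 0 else if j = m then 1 else 2) = m := by
  simp only [Perm.mem_alternatingGroup]
  set_option maxRecDepth 10000 in decide

theorem apply_eq_apply_canonical {α : Type*} {T : Fin 5 → Fin 5 → Fin 5 → α}
    (hT : ∀ σ ∈ alternatingGroup (Fin 5), ∀ i j m, T (σ i) (σ j) (σ m) = T i j m)
    (i j m : Fin 5) :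
    T i j m = T 0 (if i = j then 0 else 1) (if i = m then 0 else if j = m then 1 else 2) := by
  obtain ⟨σ, hσ, hi, hj, hm⟩ := exists_mem_alternatingGroup_canonical i j m
  conv_lhs => rw [← hi, ← hj, ← hm]
  exact hT σ hσ _ _ _

theorem eq_zero_of_alternating_invariant {R : Type*} [CommRing R]
    {T : Fin 5 → Fin 5 → Fin 5 → R} (h2 : IsUnit (2 : R))
    (hT : ∀ σ ∈ alternatingGroup (Fin 5), ∀ i j m, T (σ i) (σ j) (σ m) = T i j m)
    (hsum₁ : ∀ j m, ∑ i, T i j m = 0) (hsum₂ : ∀ i m, ∑ j, T i j m = 0)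
    (hsum₃ : ∀ i j, ∑ m, T i j m = 0) (h012 : T 0 1 2 = 0) (i j m : Fin 5) :
    T i j m = 0 := by
  have canon := apply_eq_apply_canonical hT
  have r₁ : T 0 0 0 + 4 * T 0 0 2 = 0 := by
    have h := hsum₃ 0 0
    rw [Fin.sum_univ_five, canon 0 0 1, canon 0 0 3, canon 0 0 4] at h
    simp only [Fin.isValue, Fin.reduceEq, if_true, if_false] at h
    linear_combination h
  have r₂ : T 0 1 0 + T 0 1 1 = 0 := by
    have h := hsum₃ 0 1
    rw [Fin.sum_univ_five, canon 0 1 3, canon 0 1 4] at h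
    simp only [Fin.isValue, Fin.reduceEq, if_false] at h
    linear_combination h - 3 * h012
  have r₃ : T 0 0 2 + T 0 1 0 = 0 := by
    have h := hsum₁ 0 2
    rw [Fin.sum_univ_five, canon 1 0 2, canon 2 0 2, canon 3 0 2, canon 4 0 2] at h
    simp only [Fin.isValue, Fin.reduceEq, if_true, if_false] at h
    linear_combination h - 3 * h012
  have r₄ : T 0 0 2 + T 0 1 1 = 0 := by
    have h := hsum₂ 0 2
    rw [Fin.sum_univ_five, canon 0 2 2, canon 0 3 2, canon 0 4 2] at h
    simp only [Fin.isValue, Fin.reduceEq, if_true, if_false] at h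
    linear_combination h - 3 * h012
  have hb : T 0 0 2 = 0 := by
    refine (h2.mul_right_eq_zero).mp ?_
    linear_combination r₃ + r₄ - r₂
  have ha : T 0 0 0 = 0 := by linear_combination r₁ - 4 * hb
  have hc : T 0 1 0 = 0 := by linear_combination r₃ - hb
  have hd : T 0 1 1 = 0 := by linear_combination r₄ - hb
  rw [canon]
  split_ifs with hij him hjm <;> first | assumption | exact absurd (hij.trans hjm) him

end invariantTensor

section deletedPermutationModule

variable (r : ℕ)

theorem gammaFun_mem (f g : Fin 5 → ZMod r) : gammaFun r f g ∈ V r := by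
  change ∑ m, (5 * f m * g m - ∑ j, f j * g j) = 0
  simp only [sum_sub_distrib, sum_const, card_univ, Fintype.card_fin, mul_assoc, ← mul_sum]
  simp

theorem gammaFun_comp_perm (σ : Perm (Fin 5)) (f g : Fin 5 → ZMod r) :
    gammaFun r (f ∘ ⇑σ⁻¹) (g ∘ ⇑σ⁻¹) = gammaFun r f g ∘ ⇑σ⁻¹ := by
  funext m
  simp only [gammaFun, Function.comp_apply, Equiv.sum_comp σ⁻¹ (fun j => f j * g j)]

theorem gammaFun_spike_zero_one_two : gammaFun r (spike 0) (spike 1) 2 = 10 := by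
  simp [gammaFun, spike, Fin.sum_univ_five]
  norm_num

def gammaV : V r →ₗ[ZMod r] V r →ₗ[ZMod r] V r :=
  LinearMap.mk₂ (ZMod r) (fun f g => ⟨gammaFun r f g, gammaFun_mem r f g⟩)
    (fun f₁ f₂ g => by
      ext m
      simp only [gammaFun, AddMemClass.mk_add_mk, Submodule.coe_add, Pi.add_apply, add_mul,
        sum_add_distrib]
      ring)
    (fun c f g => by
      ext m
      simp only [gammaFun, SetLike.mk_smul_mk, SetLike.val_smul, Pi.smul_apply, smul_eq_mul,
        mul_assoc, ← mul_sum]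
      ring)
    (fun f g₁ g₂ => by
      ext m
      simp only [gammaFun, AddMemClass.mk_add_mk, Submodule.coe_add, Pi.add_apply, mul_add,
        sum_add_distrib]
      ring)
    (fun c f g => by
      ext m
      simp only [gammaFun, SetLike.mk_smul_mk, SetLike.val_smul, Pi.smul_apply, smul_eq_mul,
        mul_left_comm _ c, ← mul_sum]
      ring)

@[simp]
theorem coe_gammaV_apply (f g : V r) : (gammaV r f g : Fin 5 → ZMod r) = gammaFun r f g :=
  rfl

theorem gammaV_rho (σ : Perm (Fin 5)) (f g : V r) :
    gammaV r (rho r σ f) (rho r σ g) = rho r σ (gammaV r f g) :=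
  Subtype.ext (gammaFun_comp_perm r σ f g)

def spikeV (i : Fin 5) : V r := ⟨spike i, sum_spike i⟩

@[simp]
theorem coe_spikeV (i : Fin 5) : (spikeV r i : Fin 5 → ZMod r) = spike i :=
  rfl

theorem rho_spikeV (σ : Perm (Fin 5)) (i : Fin 5) : rho r σ (spikeV r i) = spikeV r (σ i) :=
  Subtype.ext (spike_comp_perm σ i)

theorem sum_spikeV : ∑ i, spikeV r i = 0 :=
  Subtype.ext <| funext fun m => by simpa [spikeV, Finset.sum_apply] using sum_spike_apply m

theorem span_range_spikeV (h5 : IsUnit (5 : ZMod r)) :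
    Submodule.span (ZMod r) (Set.range (spikeV r)) = ⊤ := by
  refine eq_top_iff.mpr fun f _ => (Submodule.smul_mem_iff_of_isUnit _ h5).mp ?_
  have hf : ∑ i, (f : Fin 5 → ZMod r) i • spikeV r i = (5 : ZMod r) • f :=
    Subtype.ext (by simpa [spikeV] using sum_smul_spike f.2)
  rw [← hf]
  exact Submodule.sum_mem _ fun i _ => Submodule.smul_mem _ _ (Submodule.subset_span ⟨i, rfl⟩)

theorem sum_map_spikeV (L : V r →ₗ[ZMod r] V r) : ∑ i, L (spikeV r i) = 0 := by
  rw [← map_sum, sum_spikeV, map_zero]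

variable {r}

theorem eq_zero_of_alternating_equivariant (h2 : IsUnit (2 : ZMod r)) (h5 : IsUnit (5 : ZMod r))
    (B : V r →ₗ[ZMod r] V r →ₗ[ZMod r] V r)
    (hB : ∀ σ ∈ alternatingGroup (Fin 5), ∀ f g,
      B (rho r σ f) (rho r σ g) = rho r σ (B f g))
    (h012 : (B (spikeV r 0) (spikeV r 1) : Fin 5 → ZMod r) 2 = 0) : B = 0 := by
  set T : Fin 5 → Fin 5 → Fin 5 → ZMod r :=
    fun i j m => ((B (spikeV r i) (spikeV r j) : V r) : Fin 5 → ZMod r) m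
  have hT : ∀ σ ∈ alternatingGroup (Fin 5), ∀ i j m, T (σ i) (σ j) (σ m) = T i j m := by
    intro σ hσ i j m
    simp only [T, ← rho_spikeV, hB σ hσ]
    exact congrArg _ (σ.symm_apply_apply m)
  have hsum₁ : ∀ j m, ∑ i, T i j m = 0 := fun j m => by
    simpa [T] using congr_fun (congrArg Subtype.val (sum_map_spikeV r (B.flip (spikeV r j)))) m
  have hsum₂ : ∀ i m, ∑ j, T i j m = 0 := fun i m => by
    simpa [T] using congr_fun (congrArg Subtype.val (sum_map_spikeV r (B (spikeV r i)))) m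
  have hsum₃ : ∀ i j, ∑ m, T i j m = 0 := fun i j => (B (spikeV r i) (spikeV r j)).2
  refine LinearMap.ext_on_range (span_range_spikeV r h5) fun i =>
    LinearMap.ext_on_range (span_range_spikeV r h5) fun j => ?_
  ext m
  exact eq_zero_of_alternating_invariant h2 hT hsum₁ hsum₂ hsum₃ h012 i j m

end deletedPermutationModule

theorem gamma_unique_equivariant_bilinear
    (r : ℕ) (hr : r.Prime) (hodd : Odd r) (hr5 : r ≠ 5) :
    ((∀ f ∈ V r, ∀ g ∈ V r, gammaFun r f g ∈ V r) ∧
      (∀ σ : Equiv.Perm (Fin 5), ∀ f g : Fin 5 → ZMod r,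
        gammaFun r (f ∘ ⇑σ⁻¹) (g ∘ ⇑σ⁻¹) = gammaFun r f g ∘ ⇑σ⁻¹)) ∧
    (∀ μ : V r →ₗ[ZMod r] V r →ₗ[ZMod r] V r,
      (∀ σ ∈ alternatingGroup (Fin 5), ∀ f g : V r,
        μ (rho r σ f) (rho r σ g) = rho r σ (μ f g)) →
      ∃ c : ZMod r, ∀ f g : V r,
        (μ f g : Fin 5 → ZMod r) = c • gammaFun r (f : Fin 5 → ZMod r) (g : Fin 5 → ZMod r)) := by
  refine ⟨⟨fun f _ g _ => gammaFun_mem r f g, gammaFun_comp_perm r⟩, fun μ hμ => ?_⟩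
  have h2 : IsUnit (2 : ZMod r) := by
    exact_mod_cast (ZMod.isUnit_iff_coprime 2 r).mpr (Nat.coprime_two_left.mpr hodd)
  have h5 : IsUnit (5 : ZMod r) := by
    exact_mod_cast (ZMod.isUnit_iff_coprime 5 r).mpr
      ((Nat.coprime_primes (by norm_num) hr).mpr hr5.symm)
  obtain ⟨u, hu⟩ : IsUnit (10 : ZMod r) := by
    rw [show (10 : ZMod r) = 2 * 5 by norm_num]
    exact h2.mul h5
  set c : ZMod r := (μ (spikeV r 0) (spikeV r 1) : Fin 5 → ZMod r) 2 * ↑u⁻¹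
  have hν : μ - c • gammaV r = 0 := by
    refine eq_zero_of_alternating_equivariant h2 h5 _ (fun σ hσ f g => ?_) ?_
    · simp [hμ σ hσ, gammaV_rho]
    · simp [c, gammaFun_spike_zero_one_two, ← hu]
  refine ⟨c, fun f g => ?_⟩
  simpa using congrArg (fun B => (B f g : Fin 5 → ZMod r)) (sub_eq_zero.mp hν)
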